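/- arXiv:1402.1286 — 3 statements merged into one kernel-verified Lean document; each statement's English description precedes it below -/
import Mathlib

section
/- Let X be a gts and αX a topological compactification of X_top. Define Ex_{αX}(U) = αX ∖ cl_{αX}(X ∖ U) for U ∈ Op_X, and let Op^w = {Ex_{αX}(U) : U ∈ Op_X}, Cov^w = {V ∈ Cov^S_{αX} : V ⊆ Op^w}. Then Cov^w is a generalized topology in αX if and only if the operator Ex_{αX} is admissibly additive, i.e., for each U ∈ Cov_X, Ex_{αX}(⋃U) = ⋃_{U∈U} Ex_{αX}(U). -/
open Set TopologicalSpace Topology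

universe u

/-- A generalized topology in the sense of Delfs–Knebusch (axioms following
Piękosz, Definition 2.2.1): `Cov` is the collection of admissible open families,
and the open sets are the members of `⋃₀ Cov`. -/
structure GenTop (X : Type u) : Type u where
  Cov : Set (Set (Set X))
  univ_open : Set.univ ∈ ⋃₀ Cov
  finite_admissible : ∀ 𝒰 : Set (Set X), 𝒰.Finite → 𝒰 ⊆ ⋃₀ Cov → 𝒰 ∈ Cov
  union_open : ∀ 𝒰 ∈ Cov, ⋃₀ 𝒰 ∈ ⋃₀ Cov
  restrict : ∀ 𝒰 ∈ Cov, ∀ V ∈ ⋃₀ Cov, (fun U => V ∩ U) '' 𝒰 ∈ Cov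
  transitive : ∀ 𝒰 ∈ Cov, ∀ f : Set X → Set (Set X),
    (∀ U ∈ 𝒰, f U ∈ Cov ∧ ⋃₀ f U = U) → {V : Set X | ∃ U ∈ 𝒰, V ∈ f U} ∈ Cov
  coarsen : ∀ 𝒰 ∈ Cov, ∀ 𝒱 ⊆ ⋃₀ Cov, (∀ U ∈ 𝒰, ∃ V ∈ 𝒱, U ⊆ V) →
    ⋃₀ 𝒱 = ⋃₀ 𝒰 → 𝒱 ∈ Cov
  regular : ∀ 𝒰 ∈ Cov, ∀ W ⊆ ⋃₀ 𝒰, (∀ U ∈ 𝒰, W ∩ U ∈ ⋃₀ Cov) → W ∈ ⋃₀ Cov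

namespace GenTop

variable {X : Type u} (G : GenTop X)

/-- The open sets of a gts. -/
def Opens : Set (Set X) := ⋃₀ G.Cov

/-- The closed sets of a gts. -/
def Closeds : Set (Set X) := {A : Set X | Aᶜ ∈ G.Opens}

/-- The topologization of a gts: the topology generated by the open sets. -/
def topol : TopologicalSpace X := TopologicalSpace.generateFrom G.Opens

/-- A gts is weakly normal if disjoint sets, each a singleton or closed,
can be separated by disjoint open sets. -/
def WeaklyNormal : Prop :=
  ∀ A₁ A₂ : Set X, ((∃ x, A₁ = {x}) ∨ A₁ ∈ G.Closeds) →
    ((∃ x, A₂ = {x}) ∨ A₂ ∈ G.Closeds) → Disjoint A₁ A₂ →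
    ∃ W₁ ∈ G.Opens, ∃ W₂ ∈ G.Opens, Disjoint W₁ W₂ ∧ A₁ ⊆ W₁ ∧ A₂ ⊆ W₂

end GenTop

variable {X K : Type u}

/-- The opens of the strongest generalized topology in a compactification `K`
associated with the gts `X`: opens of `K` whose trace on `X` is open. -/
def OpS (G : GenTop X) [TopologicalSpace K] (α : X → K) : Set (Set K) :=
  {V : Set K | IsOpen V ∧ α ⁻¹' V ∈ G.Opens}

/-- The strongest generalized topology in a compactification `K` associated
with the generalized topology of `X`. -/
def CovS (G : GenTop X) [TopologicalSpace K] (α : X → K) : Set (Set (Set K)) :=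
  {𝒱 : Set (Set K) | 𝒱 ⊆ OpS G α ∧ (fun V => α ⁻¹' V) '' 𝒱 ∈ G.Cov}

/-- The extension operator `Ex_{αX}(U) = αX ∖ cl_{αX}(X ∖ U)`. -/
def ExOp [TopologicalSpace K] (α : X → K) (U : Set X) : Set K :=
  (closure (α '' Uᶜ))ᶜ

/-- The wallmanian part of `Op^S`. -/
def Opw (G : GenTop X) [TopologicalSpace K] (α : X → K) : Set (Set K) :=
  {V : Set K | ∃ U ∈ G.Opens, V = ExOp α U}

/-- The wallmanian part of `Cov^S`. -/
def Covw (G : GenTop X) [TopologicalSpace K] (α : X → K) : Set (Set (Set K)) :=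
  {𝒱 : Set (Set K) | 𝒱 ∈ CovS G α ∧ 𝒱 ⊆ Opw G α}

/-!
Since `α` is inducing, `Ex_{αX}` is a bijection from `Op_X` onto `Op^w` whose inverse is the
trace `V ↦ α⁻¹ V`, and a family of `Op^w` lies in `Cov^w` exactly when its traces form an
admissible family of `X`. Under this correspondence every axiom of a generalized topology
transfers from `Cov_X` to `Cov^w`, except that the union of a family in `Cov^w` has to lie in
`Op^w` again: for the family `Ex_{αX} '' 𝒰` this says precisely that `Ex_{αX}(⋃ 𝒰)` is the
union of the `Ex_{αX}(U)`. Regularity then follows from the union axiom applied to the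
family `{W ∩ V | V ∈ 𝒱}`.
-/

namespace GenTop

variable {X : Type u} (G : GenTop X)

lemma mem_opens_of_mem_cov {𝒰 : Set (Set X)} (h𝒰 : 𝒰 ∈ G.Cov) {U : Set X} (hU : U ∈ 𝒰) :
    U ∈ G.Opens :=
  ⟨𝒰, h𝒰, hU⟩

lemma inter_mem_opens {U V : Set X} (hU : U ∈ G.Opens) (hV : V ∈ G.Opens) :
    U ∩ V ∈ G.Opens := by
  have hsingle : ({V} : Set (Set X)) ∈ G.Cov :=
    G.finite_admissible _ (finite_singleton V) (singleton_subset_iff.2 hV)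
  have hrestr := G.restrict _ hsingle U hU
  rw [image_singleton] at hrestr
  exact G.mem_opens_of_mem_cov hrestr rfl

end GenTop

section Preimage

variable {X K : Type u} (α : X → K)

lemma preimage_sUnion_eq_sUnion_image (𝒱 : Set (Set K)) :
    α ⁻¹' ⋃₀ 𝒱 = ⋃₀ ((α ⁻¹' ·) '' 𝒱) := by
  rw [sUnion_image, preimage_sUnion]

lemma preimage_image_inter (W : Set K) (𝒱 : Set (Set K)) :
    (α ⁻¹' ·) '' ((W ∩ ·) '' 𝒱) = (α ⁻¹' W ∩ ·) '' ((α ⁻¹' ·) '' 𝒱) := by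
  simp only [image_image, preimage_inter]

end Preimage

lemma sUnion_image_inter_of_subset {K : Type u} {W : Set K} {𝒱 : Set (Set K)}
    (hW : W ⊆ ⋃₀ 𝒱) : ⋃₀ ((W ∩ ·) '' 𝒱) = W := by
  rw [sUnion_image, ← inter_iUnion₂, ← sUnion_eq_biUnion, inter_eq_left.2 hW]

section ExOp

variable {X K : Type u} [TopologicalSpace K] (α : X → K)

lemma isOpen_exOp (U : Set X) : IsOpen (ExOp α U) :=
  isClosed_closure.isOpen_compl

@[simp]
lemma exOp_univ : ExOp α (univ : Set X) = univ := by
  simp [ExOp]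

lemma exOp_inter (U V : Set X) : ExOp α (U ∩ V) = ExOp α U ∩ ExOp α V := by
  rw [ExOp, compl_inter, image_union, closure_union, compl_union, ExOp, ExOp]

variable {α}

lemma preimage_exOp [TopologicalSpace X] (hα : IsInducing α) {U : Set X} (hU : IsOpen U) :
    α ⁻¹' ExOp α U = U := by
  rw [ExOp, preimage_compl, ← hα.closure_eq_preimage_closure_image,
    hU.isClosed_compl.closure_eq, compl_compl]

end ExOp

def AdmissiblyAdditive {X K : Type u} (G : GenTop X) [TopologicalSpace K] (α : X → K) : Prop :=
  ∀ 𝒰 ∈ G.Cov, ExOp α (⋃₀ 𝒰) = ⋃ U ∈ 𝒰, ExOp α U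

section Wallman

variable {X K : Type u} {G : GenTop X} [TopologicalSpace K] {α : X → K}

lemma preimage_exOp_of_mem_opens (hind : @IsInducing X K G.topol _ α) {U : Set X}
    (hU : U ∈ G.Opens) : α ⁻¹' ExOp α U = U :=
  @preimage_exOp X K _ α G.topol hind U (isOpen_generateFrom_of_mem hU)

lemma exOp_mem_opw {U : Set X} (hU : U ∈ G.Opens) : ExOp α U ∈ Opw G α :=
  ⟨U, hU, rfl⟩

lemma preimage_mem_opens_of_mem_opw (hind : @IsInducing X K G.topol _ α) {V : Set K}
    (hV : V ∈ Opw G α) : α ⁻¹' V ∈ G.Opens := by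
  obtain ⟨U, hU, rfl⟩ := hV
  rwa [preimage_exOp_of_mem_opens hind hU]

lemma exOp_preimage_of_mem_opw (hind : @IsInducing X K G.topol _ α) {V : Set K}
    (hV : V ∈ Opw G α) : ExOp α (α ⁻¹' V) = V := by
  obtain ⟨U, hU, rfl⟩ := hV
  rw [preimage_exOp_of_mem_opens hind hU]

lemma opw_subset_opS (hind : @IsInducing X K G.topol _ α) : Opw G α ⊆ OpS G α := by
  rintro _ ⟨U, hU, rfl⟩
  exact ⟨isOpen_exOp α U, preimage_mem_opens_of_mem_opw hind (exOp_mem_opw hU)⟩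

lemma mem_covw_iff (hind : @IsInducing X K G.topol _ α) {𝒱 : Set (Set K)} :
    𝒱 ∈ Covw G α ↔ 𝒱 ⊆ Opw G α ∧ (α ⁻¹' ·) '' 𝒱 ∈ G.Cov :=
  ⟨fun h => ⟨h.2, h.1.2⟩, fun h => ⟨⟨h.1.trans (opw_subset_opS hind), h.2⟩, h.1⟩⟩

lemma sUnion_covw (hind : @IsInducing X K G.topol _ α) : ⋃₀ Covw G α = Opw G α := by
  refine subset_antisymm (sUnion_subset fun 𝒱 h𝒱 => h𝒱.2) fun V hV => ⟨{V}, ?_, rfl⟩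
  refine (mem_covw_iff hind).2 ⟨singleton_subset_iff.2 hV, ?_⟩
  rw [image_singleton]
  exact G.finite_admissible _ (finite_singleton _)
    (singleton_subset_iff.2 (preimage_mem_opens_of_mem_opw hind hV))

lemma preimage_image_exOp (hind : @IsInducing X K G.topol _ α) {𝒰 : Set (Set X)}
    (h𝒰 : 𝒰 ⊆ G.Opens) : (α ⁻¹' ·) '' (ExOp α '' 𝒰) = 𝒰 := by
  rw [image_image]
  exact (image_congr fun U hU => preimage_exOp_of_mem_opens hind (h𝒰 hU)).trans (image_id 𝒰)

lemma exOp_image_mem_covw (hind : @IsInducing X K G.topol _ α) {𝒰 : Set (Set X)}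
    (h𝒰 : 𝒰 ∈ G.Cov) : ExOp α '' 𝒰 ∈ Covw G α := by
  have hopens : 𝒰 ⊆ G.Opens := fun U hU => G.mem_opens_of_mem_cov h𝒰 hU
  refine (mem_covw_iff hind).2 ⟨?_, ?_⟩
  · rintro _ ⟨U, hU, rfl⟩
    exact exOp_mem_opw (hopens hU)
  · rwa [preimage_image_exOp hind hopens]

lemma admissiblyAdditive_of_covw_eq (hind : @IsInducing X K G.topol _ α) (G' : GenTop K)
    (hG' : G'.Cov = Covw G α) : AdmissiblyAdditive G α := by
  intro 𝒰 h𝒰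
  have hcov := exOp_image_mem_covw hind h𝒰
  have hunion : ⋃₀ (ExOp α '' 𝒰) ∈ Opw G α := by
    rw [← sUnion_covw hind, ← hG']
    exact G'.union_open _ (hG' ▸ hcov)
  have htrace : α ⁻¹' ⋃₀ (ExOp α '' 𝒰) = ⋃₀ 𝒰 := by
    rw [preimage_sUnion_eq_sUnion_image, preimage_image_exOp hind
      fun U hU => G.mem_opens_of_mem_cov h𝒰 hU]
  rw [← sUnion_image, ← exOp_preimage_of_mem_opw hind hunion, htrace]

lemma sUnion_mem_opw_of_mem_covw (hind : @IsInducing X K G.topol _ α)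
    (hadd : AdmissiblyAdditive G α) {𝒱 : Set (Set K)} (h𝒱 : 𝒱 ∈ Covw G α) :
    ⋃₀ 𝒱 ∈ Opw G α := by
  obtain ⟨hsub, hcov⟩ := (mem_covw_iff hind).1 h𝒱
  refine ⟨⋃₀ ((α ⁻¹' ·) '' 𝒱), G.union_open _ hcov, ?_⟩
  rw [hadd _ hcov, biUnion_image, sUnion_eq_biUnion]
  exact iUnion₂_congr fun V hV => (exOp_preimage_of_mem_opw hind (hsub hV)).symm

lemma inter_mem_opw (hind : @IsInducing X K G.topol _ α) {V W : Set K}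
    (hV : V ∈ Opw G α) (hW : W ∈ Opw G α) : V ∩ W ∈ Opw G α := by
  rw [← exOp_preimage_of_mem_opw hind hV, ← exOp_preimage_of_mem_opw hind hW, ← exOp_inter]
  exact exOp_mem_opw (G.inter_mem_opens (preimage_mem_opens_of_mem_opw hind hV)
    (preimage_mem_opens_of_mem_opw hind hW))

lemma univ_mem_opw : univ ∈ Opw G α :=
  ⟨univ, G.univ_open, (exOp_univ α).symm⟩

lemma covw_finite (hind : @IsInducing X K G.topol _ α) {𝒱 : Set (Set K)} (hfin : 𝒱.Finite)
    (hsub : 𝒱 ⊆ Opw G α) : 𝒱 ∈ Covw G α := by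
  refine (mem_covw_iff hind).2 ⟨hsub, G.finite_admissible _ (hfin.image _) ?_⟩
  rintro _ ⟨V, hV, rfl⟩
  exact preimage_mem_opens_of_mem_opw hind (hsub hV)

lemma image_inter_mem_covw (hind : @IsInducing X K G.topol _ α) {𝒱 : Set (Set K)}
    (h𝒱 : 𝒱 ∈ Covw G α) {W : Set K} (hW : α ⁻¹' W ∈ G.Opens)
    (hWV : ∀ V ∈ 𝒱, W ∩ V ∈ Opw G α) : (W ∩ ·) '' 𝒱 ∈ Covw G α := by
  refine (mem_covw_iff hind).2 ⟨?_, ?_⟩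
  · rintro _ ⟨V, hV, rfl⟩
    exact hWV V hV
  · rw [preimage_image_inter]
    exact G.restrict _ ((mem_covw_iff hind).1 h𝒱).2 _ hW

lemma covw_restrict (hind : @IsInducing X K G.topol _ α) {𝒱 : Set (Set K)}
    (h𝒱 : 𝒱 ∈ Covw G α) {W : Set K} (hW : W ∈ Opw G α) : (W ∩ ·) '' 𝒱 ∈ Covw G α :=
  image_inter_mem_covw hind h𝒱 (preimage_mem_opens_of_mem_opw hind hW)
    fun _ hV => inter_mem_opw hind hW (h𝒱.2 hV)

lemma covw_transitive (hind : @IsInducing X K G.topol _ α) {𝒱 : Set (Set K)}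
    (h𝒱 : 𝒱 ∈ Covw G α) (f : Set K → Set (Set K))
    (hf : ∀ V ∈ 𝒱, f V ∈ Covw G α ∧ ⋃₀ f V = V) :
    {V' : Set K | ∃ V ∈ 𝒱, V' ∈ f V} ∈ Covw G α := by
  obtain ⟨hsub, hcov⟩ := (mem_covw_iff hind).1 h𝒱
  -- transport `f` to `X` along the bijection `Ex_{αX}` from `Op_X` onto `Op^w`
  set g : Set X → Set (Set X) := fun U => (α ⁻¹' ·) '' f (ExOp α U)
  have hg : ∀ V ∈ 𝒱, g (α ⁻¹' V) = (α ⁻¹' ·) '' f V := fun V hV => by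
    simp only [g, exOp_preimage_of_mem_opw hind (hsub hV)]
  have hgcov := G.transitive _ hcov g <| by
    rintro _ ⟨V, hV, rfl⟩
    rw [hg V hV, ← preimage_sUnion_eq_sUnion_image, (hf V hV).2]
    exact ⟨((mem_covw_iff hind).1 (hf V hV).1).2, rfl⟩
  refine (mem_covw_iff hind).2 ⟨fun V' ⟨V, hV, hV'⟩ => (hf V hV).1.2 hV', ?_⟩
  convert hgcov using 1
  ext T
  constructor
  · rintro ⟨V', ⟨V, hV, hV'⟩, rfl⟩
    exact ⟨α ⁻¹' V, mem_image_of_mem _ hV, hg V hV ▸ mem_image_of_mem _ hV'⟩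
  · rintro ⟨_, ⟨V, hV, rfl⟩, hT⟩
    obtain ⟨V', hV', rfl⟩ := hg V hV ▸ hT
    exact ⟨V', ⟨V, hV, hV'⟩, rfl⟩

lemma covw_coarsen (hind : @IsInducing X K G.topol _ α) {𝒱 : Set (Set K)}
    (h𝒱 : 𝒱 ∈ Covw G α) {𝒲 : Set (Set K)} (h𝒲 : 𝒲 ⊆ Opw G α)
    (hrefine : ∀ V ∈ 𝒱, ∃ W ∈ 𝒲, V ⊆ W) (hunion : ⋃₀ 𝒲 = ⋃₀ 𝒱) : 𝒲 ∈ Covw G α := by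
  refine (mem_covw_iff hind).2 ⟨h𝒲, G.coarsen _ ((mem_covw_iff hind).1 h𝒱).2 _ ?_ ?_ ?_⟩
  · rintro _ ⟨W, hW, rfl⟩
    exact preimage_mem_opens_of_mem_opw hind (h𝒲 hW)
  · rintro _ ⟨V, hV, rfl⟩
    obtain ⟨W, hW, hVW⟩ := hrefine V hV
    exact ⟨α ⁻¹' W, mem_image_of_mem _ hW, preimage_mono hVW⟩
  · rw [← preimage_sUnion_eq_sUnion_image, ← preimage_sUnion_eq_sUnion_image, hunion]

lemma covw_regular (hind : @IsInducing X K G.topol _ α) (hadd : AdmissiblyAdditive G α)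
    {𝒱 : Set (Set K)} (h𝒱 : 𝒱 ∈ Covw G α) {W : Set K} (hW : W ⊆ ⋃₀ 𝒱)
    (hWV : ∀ V ∈ 𝒱, W ∩ V ∈ Opw G α) : W ∈ Opw G α := by
  have hcov := ((mem_covw_iff hind).1 h𝒱).2
  have htrace : α ⁻¹' W ∈ G.Opens := by
    refine G.regular _ hcov _ ?_ ?_
    · rw [← preimage_sUnion_eq_sUnion_image]
      exact preimage_mono hW
    · rintro _ ⟨V, hV, rfl⟩
      exact preimage_mem_opens_of_mem_opw hind (hWV V hV)
  have hunion := sUnion_mem_opw_of_mem_covw hind hadd (image_inter_mem_covw hind h𝒱 htrace hWV)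
  rwa [sUnion_image_inter_of_subset hW] at hunion

def covwGenTop (hind : @IsInducing X K G.topol _ α) (hadd : AdmissiblyAdditive G α) :
    GenTop K where
  Cov := Covw G α
  univ_open := (sUnion_covw hind).symm ▸ univ_mem_opw
  finite_admissible _ hfin hsub := covw_finite hind hfin (sUnion_covw hind ▸ hsub)
  union_open _ h𝒱 := (sUnion_covw hind).symm ▸ sUnion_mem_opw_of_mem_covw hind hadd h𝒱
  restrict _ h𝒱 _ hW := covw_restrict hind h𝒱 (sUnion_covw hind ▸ hW)
  transitive _ h𝒱 f hf := covw_transitive hind h𝒱 f hf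
  coarsen _ h𝒱 _ h𝒲 hrefine hunion :=
    covw_coarsen hind h𝒱 (sUnion_covw hind ▸ h𝒲) hrefine hunion
  regular _ h𝒱 _ hW hWV :=
    (sUnion_covw hind).symm ▸ covw_regular hind hadd h𝒱 hW (sUnion_covw hind ▸ hWV)

end Wallman

theorem stmt_12_general {X K : Type u} (G : GenTop X) [TopologicalSpace K]
    (α : X → K) (hind : @Topology.IsInducing X K G.topol _ α) :
    (∃ G' : GenTop K, G'.Cov = Covw G α) ↔
      ∀ 𝒰 ∈ G.Cov, ExOp α (⋃₀ 𝒰) = ⋃ U ∈ 𝒰, ExOp α U :=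
  ⟨fun ⟨G', hG'⟩ => admissiblyAdditive_of_covw_eq hind G' hG',
    fun hadd => ⟨covwGenTop hind hadd, rfl⟩⟩

/-- `Cov^w` is a generalized topology in the compactification `αX` iff the
operator `Ex_{αX}` is admissibly additive. -/
theorem stmt_12 {X K : Type u} (G : GenTop X) [TopologicalSpace K] [CompactSpace K]
    (α : X → K) (hinj : Function.Injective α)
    (hind : @Topology.IsInducing X K G.topol _ α) (hdense : DenseRange α) :
    (∃ G' : GenTop K, G'.Cov = Covw G α) ↔
      ∀ 𝒰 ∈ G.Cov, ExOp α (⋃₀ 𝒰) = ⋃ U ∈ 𝒰, ExOp α U :=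
  stmt_12_general G α hind
end

section
/- Let X be a weakly normal gts such that X_top is a locally compact Hausdorff space. If V is open in X and x ∈ V, then there exist an open set U of X and a topologically compact closed set C of X with x ∈ U ⊆ C ⊆ V. -/
/-!
Weak normality makes a gts regular: separating a point `x` of an open set `V'` from the closed
set `V'ᶜ` yields an open `U` and a closed `C` with `x ∈ U ⊆ C ⊆ V'`. The open sets of `X` are
closed under finite intersections, so they form a basis of `X_top`; hence `V'` can be chosen
inside the interior of a compact neighbourhood `K ⊆ V` of `x`, and then `C` is compact as a
closed subset of `K`.
-/

open Set TopologicalSpace Topology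

universe u

namespace GenTop

variable {X : Type u} (G : GenTop X)

lemma inter_mem_opens_s15 {A B : Set X} (hA : A ∈ G.Opens) (hB : B ∈ G.Opens) :
    A ∩ B ∈ G.Opens := by
  have hB_cov : ({B} : Set (Set X)) ∈ G.Cov :=
    G.finite_admissible {B} (finite_singleton B) (singleton_subset_iff.mpr hB)
  exact ⟨(fun U => A ∩ U) '' {B}, G.restrict {B} hB_cov A hA, ⟨B, rfl, rfl⟩⟩

lemma isTopologicalBasis_opens : @IsTopologicalBasis X G.topol G.Opens := by
  have hbasis := isTopologicalBasis_of_subbasis_of_inter (t := G.topol) (r := G.Opens) rfl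
    fun _ hA _ hB => G.inter_mem_opens_s15 hA hB
  rwa [insert_eq_of_mem (show univ ∈ G.Opens from G.univ_open)] at hbasis

lemma isOpen_of_mem_opens {A : Set X} (hA : A ∈ G.Opens) : IsOpen[G.topol] A :=
  GenerateOpen.basic A hA

lemma compl_mem_closeds {A : Set X} (hA : A ∈ G.Opens) : Aᶜ ∈ G.Closeds := by
  rwa [Closeds, mem_ofPred_eq, compl_compl]

variable {G}

lemma WeaklyNormal.exists_opens_subset_closeds_subset (hwn : G.WeaklyNormal) {V : Set X}
    (hV : V ∈ G.Opens) {x : X} (hx : x ∈ V) :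
    ∃ U ∈ G.Opens, ∃ C ∈ G.Closeds, x ∈ U ∧ U ⊆ C ∧ C ⊆ V := by
  obtain ⟨W₁, hW₁, W₂, hW₂, hdisj, hxW₁, hVW₂⟩ :=
    hwn {x} Vᶜ (Or.inl ⟨x, rfl⟩) (Or.inr (G.compl_mem_closeds hV))
      (disjoint_singleton_left.mpr (not_not.mpr hx))
  exact ⟨W₁, hW₁, W₂ᶜ, G.compl_mem_closeds hW₂, singleton_subset_iff.mp hxW₁,
    subset_compl_iff_disjoint_right.mpr hdisj, compl_subset_comm.mp hVW₂⟩

end GenTop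

theorem stmt_15_general {X : Type u} (G : GenTop X) (hwn : G.WeaklyNormal)
    (hlc : @LocallyCompactSpace X G.topol)
    (V : Set X) (hV : V ∈ G.Opens) (x : X) (hx : x ∈ V) :
    ∃ U ∈ G.Opens, ∃ C ∈ G.Closeds,
      @IsCompact X G.topol C ∧ x ∈ U ∧ U ⊆ C ∧ C ⊆ V := by
  let := G.topol
  obtain ⟨K, hK, hxK, hKV⟩ := exists_compact_subset (G.isOpen_of_mem_opens hV) hx
  obtain ⟨V', hV', hxV', hV'K⟩ :=
    G.isTopologicalBasis_opens.exists_subset_of_mem_open hxK isOpen_interior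
  obtain ⟨U, hU, C, hC, hxU, hUC, hCV'⟩ := hwn.exists_opens_subset_closeds_subset hV' hxV'
  have hCK : C ⊆ K := hCV'.trans (hV'K.trans interior_subset)
  have hC_isClosed : IsClosed C := isOpen_compl_iff.mp (G.isOpen_of_mem_opens hC)
  exact ⟨U, hU, C, hC, hK.of_isClosed_subset hC_isClosed hCK, hxU, hUC, hCK.trans hKV⟩

/-- In a weakly normal gts with locally compact Hausdorff topologization:
every point of an open set has an open neighbourhood contained in a
topologically compact closed subset of the open set. -/
theorem stmt_15 {X : Type u} (G : GenTop X) (hwn : G.WeaklyNormal)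
    (hlc : @LocallyCompactSpace X G.topol) (h2 : @T2Space X G.topol)
    (V : Set X) (hV : V ∈ G.Opens) (x : X) (hx : x ∈ V) :
    ∃ U ∈ G.Opens, ∃ C ∈ G.Closeds,
      @IsCompact X G.topol C ∧ x ∈ U ∧ U ⊆ C ∧ C ⊆ V :=
  stmt_15_general G hwn hlc V hV x hx
end

section
/- Let f : X → Y be a W-continuous mapping of a gts X into a zero-dimensional gts Y. Then f is w-continuous. -/
open Set TopologicalSpace Topology

universe u

/-- `𝒰 ⪯ 𝒱`: every member of `𝒰` is contained in a member of `𝒱` and the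
unions agree. -/
def Refines {X : Type u} (𝒰 𝒱 : Set (Set X)) : Prop :=
  (∀ U ∈ 𝒰, ∃ V ∈ 𝒱, U ⊆ V) ∧ ⋃₀ 𝒰 = ⋃₀ 𝒱

/-- `f` is w-continuous: every finite open cover `𝒱` of `Y` admits a finite
open cover `𝒰` of `X` with `𝒰 ⪯ f⁻¹(𝒱)`. -/
def WSmallCont {X Y : Type u} (GX : GenTop X) (GY : GenTop Y) (f : X → Y) : Prop :=
  ∀ 𝒱 ⊆ GY.Opens, 𝒱.Finite → ⋃₀ 𝒱 = Set.univ →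
    ∃ 𝒰 ⊆ GX.Opens, 𝒰.Finite ∧ ⋃₀ 𝒰 = Set.univ ∧
      Refines 𝒰 ((fun V => f ⁻¹' V) '' 𝒱)

/-- `f` is W-continuous: every admissible cover `𝒱` of `Y` admits an admissible
cover `𝒰` of `X` with `𝒰 ⪯ f⁻¹(𝒱)`. -/
def WBigCont {X Y : Type u} (GX : GenTop X) (GY : GenTop Y) (f : X → Y) : Prop :=
  ∀ 𝒱 ∈ GY.Cov, ⋃₀ 𝒱 = Set.univ →
    ∃ 𝒰 ∈ GX.Cov, ⋃₀ 𝒰 = Set.univ ∧ Refines 𝒰 ((fun V => f ⁻¹' V) '' 𝒱)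

/-- A gts is zero-dimensional if every finite open cover has a pairwise
disjoint finite open refinement cover. -/
def ZeroDim {Y : Type u} (GY : GenTop Y) : Prop :=
  ∀ 𝒱 ⊆ GY.Opens, 𝒱.Finite → ⋃₀ 𝒱 = Set.univ →
    ∃ 𝒲 ⊆ GY.Opens, 𝒲.Finite ∧ ⋃₀ 𝒲 = Set.univ ∧
      (∀ V ∈ 𝒲, ∀ W ∈ 𝒲, V ≠ W → Disjoint V W) ∧ Refines 𝒲 𝒱

/-!
Refine the given finite open cover of `Y` by a finite pairwise disjoint open cover `𝒲`, which is
admissible. W-continuity yields an admissible cover `𝒰` of `X` each member of which lies in the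
preimage of some `W₀ ∈ 𝒲`; by disjointness it is then contained in, or disjoint from, each `f⁻¹(W)`.
The regularity axiom therefore makes every `f⁻¹(W)` open, and `f⁻¹(𝒲)` is the required finite cover.
-/

namespace GenTop

variable {X : Type u} (G : GenTop X)

theorem empty_mem_opens : (∅ : Set X) ∈ G.Opens :=
  sUnion_empty (α := X) ▸ G.union_open ∅ (G.finite_admissible ∅ finite_empty (empty_subset _))

theorem mem_opens_of_subset_or_disjoint {𝒰 : Set (Set X)} (h𝒰 : 𝒰 ∈ G.Cov) {S : Set X}
    (hS : S ⊆ ⋃₀ 𝒰) (hsep : ∀ U ∈ 𝒰, U ⊆ S ∨ Disjoint S U) : S ∈ G.Opens := by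
  refine G.regular 𝒰 h𝒰 S hS fun U hU => ?_
  rcases hsep U hU with hUS | hdisj
  · rw [inter_eq_self_of_subset_right hUS]
    exact ⟨𝒰, h𝒰, hU⟩
  · rw [hdisj.inter_eq]
    exact G.empty_mem_opens

end GenTop

theorem Refines.preimage {X Y : Type u} {𝒲 𝒱 : Set (Set Y)} (h : Refines 𝒲 𝒱) (f : X → Y) :
    Refines ((fun V => f ⁻¹' V) '' 𝒲) ((fun V => f ⁻¹' V) '' 𝒱) := by
  refine ⟨?_, ?_⟩
  · rintro _ ⟨W, hW, rfl⟩
    obtain ⟨V, hV, hWV⟩ := h.1 W hW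
    exact ⟨f ⁻¹' V, mem_image_of_mem _ hV, preimage_mono hWV⟩
  · simp only [sUnion_image, ← preimage_iUnion₂, ← sUnion_eq_biUnion, h.2]

theorem GenTop.preimage_mem_opens_of_refines_pairwiseDisjoint {X Y : Type u} (GX : GenTop X)
    {f : X → Y} {𝒰 : Set (Set X)} {𝒲 : Set (Set Y)} (h𝒰 : 𝒰 ∈ GX.Cov)
    (href : Refines 𝒰 ((fun V => f ⁻¹' V) '' 𝒲)) (hdisj : 𝒲.PairwiseDisjoint id)
    {W : Set Y} (hW : W ∈ 𝒲) : f ⁻¹' W ∈ GX.Opens := by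
  refine GX.mem_opens_of_subset_or_disjoint h𝒰 ?_ fun U hU => ?_
  · rw [href.2]
    exact subset_sUnion_of_mem (mem_image_of_mem _ hW)
  · obtain ⟨_, ⟨W₀, hW₀, rfl⟩, hUW₀⟩ := href.1 U hU
    rcases eq_or_ne W₀ W with rfl | hne
    · exact Or.inl hUW₀
    · exact Or.inr (((hdisj hW₀ hW hne).preimage f).symm.mono_right hUW₀)

/-- A W-continuous map into a zero-dimensional gts is w-continuous. -/
theorem stmt_18 {X Y : Type u} (GX : GenTop X) (GY : GenTop Y) (f : X → Y)
    (hf : WBigCont GX GY f) (hY : ZeroDim GY) : WSmallCont GX GY f := by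
  intro 𝒱 h𝒱op h𝒱fin h𝒱cov
  obtain ⟨𝒲, h𝒲op, h𝒲fin, h𝒲cov, h𝒲disj, h𝒲ref⟩ := hY 𝒱 h𝒱op h𝒱fin h𝒱cov
  obtain ⟨𝒰, h𝒰, -, h𝒰ref⟩ := hf 𝒲 (GY.finite_admissible 𝒲 h𝒲fin h𝒲op) h𝒲cov
  refine ⟨(fun V => f ⁻¹' V) '' 𝒲, ?_, h𝒲fin.image _, ?_, h𝒲ref.preimage f⟩
  · rintro _ ⟨W, hW, rfl⟩
    exact GX.preimage_mem_opens_of_refines_pairwiseDisjoint h𝒰 h𝒰ref h𝒲disj hW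
  · rw [sUnion_image, ← preimage_iUnion₂, ← sUnion_eq_biUnion, h𝒲cov, preimage_univ]
end
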